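/- arXiv:math/0107053 — 2 statements merged into one kernel-verified Lean document; each statement's English description precedes it below -/
import Mathlib

section
/- Fix $k \ge 1$ and let $m = (k+1)(k+2)/2$. Let $M(q,z_1,z_2)$ be the $m \times m$ matrix with entries $M_{i,l}^{i',l'} = (qz_1z_2)^{l'-i'} z_2^i$ if $l-i \le i' \le l' \le k-i$; $(qz_1z_2)^{l'-l+i} z_2^i$ if $i' < l-i \le l' \le k-i$; and $0$ otherwise ($0 \le i \le l \le k$, $0 \le i' \le l' \le k$). Then the system of difference equations $\chi(q,z_1,z_2) = M(q,z_1,z_2)\, \chi(q,z_1,qz_2)$ with initial condition $\chi_{i,l}(q,z_1,0) = \delta_{i,0}\delta_{l,0}$ has a unique solution $\chi \in (\mathbb{C}[[q,z_2]]((z_1^{-1})))^m$. -/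
open MvPowerSeries

namespace DiffEqn

/-- Index set: pairs `(i,l)` with `0 ≤ i ≤ l ≤ k`. -/
abbrev PairIdx (k : ℕ) := {p : Fin (k + 1) × Fin (k + 1) // p.1 ≤ p.2}

/-- The coefficient field `ℂ((z₁⁻¹))`: Laurent series in the variable `z₁⁻¹`. -/
abbrev K := LaurentSeries ℂ

/-- `z₁`, the inverse of the Laurent series variable. -/
noncomputable def z1K : K := HahnSeries.single (-1 : ℤ) (1 : ℂ)

/-- The ring `ℂ[[q,z₂]]((z₁⁻¹))`, realized as formal power series in
`q = X 0`, `z₂ = X 1` with coefficients in `ℂ((z₁⁻¹))`. -/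
abbrev R := MvPowerSeries (Fin 2) K

/-- The entry `M_{i,l}^{i',l'}` of `M(q,z₁,z₂)`:
`(q z₁ z₂)^(l'-i') z₂^i` if `l-i ≤ i' ≤ l' ≤ k-i`;
`(q z₁ z₂)^(l'-l+i) z₂^i` if `i' < l-i ≤ l' ≤ k-i`; `0` otherwise
(inequalities written additively to avoid truncated subtraction;
`z₁` enters as the constant `z1K`). -/
noncomputable def Ment (k i l i' l' : ℕ) : R :=
  if l ≤ i' + i ∧ i' ≤ l' ∧ l' + i ≤ k then
    MvPowerSeries.C (σ := Fin 2) (R := K) (z1K ^ (l' - i')) * (X 0 : R) ^ (l' - i') *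
      (X 1 : R) ^ ((l' - i') + i)
  else if i' + i < l ∧ l ≤ l' + i ∧ l' + i ≤ k then
    MvPowerSeries.C (σ := Fin 2) (R := K) (z1K ^ (l' + i - l)) * (X 0 : R) ^ (l' + i - l) *
      (X 1 : R) ^ ((l' + i - l) + i)
  else 0

/-- The shift `S : f(q,z₁,z₂) ↦ f(q,z₁,qz₂)`, defined on coefficients:
the coefficient of `q^α z₂^β` in `S f` is that of `q^{α-β} z₂^β` in `f`. -/
noncomputable def S (f : R) : R := fun d =>
  if d 1 ≤ d 0 then MvPowerSeries.coeff (R := K) (d.update 0 (d 0 - d 1)) f else 0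

end DiffEqn

open Function

/-!
Every entry of `M` is a monomial `c q^n z₂^(n+i)`, and the shift `S` sends the coefficient of
`q^a z₂^b` to that of `q^(a+b) z₂^b`. Hence the coefficient of `q^α z₂^β` in `M · Sχ` involves
`χ` only at `q^(α-β+i) z₂^(β-n-i)`: for `β ≥ 1` this lies strictly below `(β, α)` in the
lexicographic order on (`z₂`-degree, `q`-degree), because either the `z₂`-degree drops or
`n + i = 0` and the `q`-degree drops by `β`. So for `β ≥ 1` the equation is a well-founded
recursion for the coefficients, while for `β = 0` it only involves `M(q,z₁,0)`, of which the
initial value `χ(q,z₁,0) = e_{0,0}` is a fixed vector.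
-/

theorem WellFounded.existsUnique_isFixedPt {κ ι A : Type*} [Nonempty A] {r : ι → ι → Prop}
    (hr : WellFounded r) (Φ : (κ → ι → A) → κ → ι → A)
    (hΦ : ∀ f g x, (∀ p y, r y x → f p y = g p y) → ∀ p, Φ f p x = Φ g p x) :
    ∃! f, IsFixedPt Φ f := by
  classical
  obtain ⟨F, hF⟩ : ∃ F : ι → κ → A, ∀ x,
      F x = fun p => Φ (fun q y => if r y x then F y q else Classical.arbitrary A) p x :=
    ⟨hr.fix fun x ih p =>
      Φ (fun q y => if h : r y x then ih y h q else Classical.arbitrary A) p x, hr.fix_eq _⟩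
  refine ⟨fun p x => F x p, ?_, fun g hg => ?_⟩
  · funext p x
    rw [hF x]
    exact hΦ _ _ x (fun q y hy => by simp [hy]) p
  · funext p x
    induction x using hr.induction generalizing p with
    | _ x ih =>
      rw [← hg, hF x]
      exact hΦ _ _ x (fun q y hy => by simp [hy, ih y hy]) p

namespace DiffEqn

noncomputable def bideg (α β : ℕ) : Fin 2 →₀ ℕ := Finsupp.single 0 α + Finsupp.single 1 β

@[simp] lemma bideg_zero (α β : ℕ) : bideg α β 0 = α := by simp [bideg]

@[simp] lemma bideg_one (α β : ℕ) : bideg α β 1 = β := by simp [bideg]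

lemma bideg_apply_zero_one (d : Fin 2 →₀ ℕ) : bideg (d 0) (d 1) = d := by
  ext x
  fin_cases x <;> simp

lemma bideg_le_bideg {α β α' β' : ℕ} : bideg α β ≤ bideg α' β' ↔ α ≤ α' ∧ β ≤ β' := by
  refine ⟨fun h => ⟨by simpa using h 0, by simpa using h 1⟩, fun ⟨h0, h1⟩ x => ?_⟩
  fin_cases x <;> simpa

lemma bideg_sub_bideg (α β α' β' : ℕ) : bideg α β - bideg α' β' = bideg (α - α') (β - β') := by
  ext x
  fin_cases x <;> simp

lemma bideg_update_zero (α β γ : ℕ) : (bideg α β).update 0 γ = bideg γ β := by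
  ext x
  fin_cases x <;> simp [Finsupp.update]

lemma C_mul_X_pow_mul_X_pow (a : K) (n m : ℕ) :
    C a * (X 0 : R) ^ n * (X 1 : R) ^ m = monomial (bideg n m) a := by
  rw [X_pow_eq, X_pow_eq, ← monomial_zero_eq_C_apply, monomial_mul_monomial,
    monomial_mul_monomial]
  simp [bideg]

lemma coeff_S (f : R) (α β : ℕ) :
    coeff (bideg α β) (S f) = if β ≤ α then coeff (bideg (α - β) β) f else 0 := by
  simp only [coeff_apply, S, bideg_zero, bideg_one, bideg_update_zero]

lemma coeff_monomial_mul_S (a : K) (n m α β : ℕ) (f : R) :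
    coeff (bideg α β) (monomial (bideg n m) a * S f) =
      if n ≤ α ∧ m ≤ β ∧ β - m ≤ α - n then
        a * coeff (bideg (α - n - (β - m)) (β - m)) f else 0 := by
  rw [coeff_monomial_mul]
  by_cases h : bideg n m ≤ bideg α β
  · rw [if_pos h, bideg_sub_bideg, coeff_S]
    rw [bideg_le_bideg] at h
    by_cases h' : β - m ≤ α - n
    · rw [if_pos h', if_pos ⟨h.1, h.2, h'⟩]
    · rw [if_neg h', if_neg (by tauto), mul_zero]
  · rw [if_neg h, if_neg (by rw [bideg_le_bideg] at h; tauto)]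

lemma exists_Ment_eq_monomial (k i l i' l' : ℕ) :
    ∃ a n, Ment k i l i' l' = monomial (bideg n (n + i)) a := by
  unfold Ment
  split_ifs
  · exact ⟨_, _, C_mul_X_pow_mul_X_pow _ _ _⟩
  · exact ⟨_, _, C_mul_X_pow_mul_X_pow _ _ _⟩
  · exact ⟨0, 0, by simp⟩

lemma Ment_zero_zero {k i l : ℕ} (hil : i ≤ l) :
    Ment k i l 0 0 = monomial (bideg 0 (0 + i)) (if l = i ∧ i ≤ k then 1 else 0) := by
  unfold Ment
  split_ifs with h₁ h₂ h₃ <;> first | omega | simp [X_pow_eq, bideg]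

lemma coeff_bideg_zero_monomial_mul_S (a : K) (n i α : ℕ) (f : R) :
    coeff (bideg α 0) (monomial (bideg n (n + i)) a * S f) =
      if n + i = 0 then a * coeff (bideg α 0) f else 0 := by
  rw [coeff_monomial_mul_S]
  by_cases h : n + i = 0
  · obtain ⟨rfl, rfl⟩ : n = 0 ∧ i = 0 := by omega
    simp
  · rw [if_neg (by omega), if_neg h]

def zLex (d' d : Fin 2 →₀ ℕ) : Prop := Prod.Lex (· < ·) (· < ·) (d' 1, d' 0) (d 1, d 0)

lemma zLex_wf : WellFounded zLex :=
  InvImage.wf (fun d : Fin 2 →₀ ℕ => (d 1, d 0)) (wellFounded_lt.prod_lex wellFounded_lt)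

lemma zLex_bideg {α β α' β' : ℕ} :
    zLex (bideg α' β') (bideg α β) ↔ β' < β ∨ β' = β ∧ α' < α := by
  simp [zLex, Prod.lex_def]

lemma coeff_monomial_mul_S_congr (a : K) (n i α : ℕ) {β : ℕ} (hβ : 0 < β) {f g : R}
    (h : ∀ d, zLex d (bideg α β) → coeff d f = coeff d g) :
    coeff (bideg α β) (monomial (bideg n (n + i)) a * S f) =
      coeff (bideg α β) (monomial (bideg n (n + i)) a * S g) := by
  rw [coeff_monomial_mul_S, coeff_monomial_mul_S]
  split_ifs
  · rw [h _ (zLex_bideg.2 (by omega))]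
  · rfl

lemma coeff_Ment_mul_S_congr (k i l i' l' α : ℕ) {β : ℕ} (hβ : 0 < β) {f g : R}
    (h : ∀ d, zLex d (bideg α β) → coeff d f = coeff d g) :
    coeff (bideg α β) (Ment k i l i' l' * S f) = coeff (bideg α β) (Ment k i l i' l' * S g) := by
  obtain ⟨a, n, hM⟩ := exists_Ment_eq_monomial k i l i' l'
  rw [hM]
  exact coeff_monomial_mul_S_congr a n i α hβ h

variable {k : ℕ}

def origin (k : ℕ) : PairIdx k := ⟨(0, 0), le_rfl⟩

lemma eq_origin_iff (p : PairIdx k) : p = origin k ↔ (p.1.1 : ℕ) = 0 ∧ (p.1.2 : ℕ) = 0 := by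
  rw [Subtype.ext_iff, Prod.ext_iff, Fin.ext_iff, Fin.ext_iff]
  rfl

lemma coeff_bideg_zero_sum_Ment_mul_S (χ : PairIdx k → R)
    (hχ : ∀ (p : PairIdx k) (α : ℕ), coeff (bideg α 0) (χ p) =
      if (p.1.1 : ℕ) = 0 ∧ (p.1.2 : ℕ) = 0 ∧ α = 0 then 1 else 0)
    (p : PairIdx k) (α : ℕ) :
    coeff (bideg α 0)
        (∑ p' : PairIdx k, Ment k p.1.1 p.1.2 p'.1.1 p'.1.2 * S (χ p')) =
      if (p.1.1 : ℕ) = 0 ∧ (p.1.2 : ℕ) = 0 ∧ α = 0 then 1 else 0 := by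
  rw [map_sum, Finset.sum_eq_single (origin k)]
  · have hil : (p.1.1 : ℕ) ≤ p.1.2 := p.2
    have hik : (p.1.1 : ℕ) ≤ k := Nat.lt_succ_iff.1 p.1.1.2
    obtain ⟨h₁, h₂⟩ := (eq_origin_iff (origin k)).1 rfl
    rw [h₁, h₂, Ment_zero_zero hil, coeff_bideg_zero_monomial_mul_S, hχ]
    split_ifs <;> simp_all
  · intro p' _ hp'
    rw [ne_eq, eq_origin_iff] at hp'
    obtain ⟨a, n, hM⟩ := exists_Ment_eq_monomial k p.1.1 p.1.2 p'.1.1 p'.1.2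
    have hχp' : coeff (bideg α 0) (χ p') = 0 := by
      rw [hχ, if_neg fun h => hp' ⟨h.1, h.2.1⟩]
    rw [hM, coeff_bideg_zero_monomial_mul_S, hχp', mul_zero, ite_self]
  · simp

variable (k) in
noncomputable def coeffStep (χ : PairIdx k → R) : PairIdx k → R := fun p d =>
  if d 1 = 0 then (if (p.1.1 : ℕ) = 0 ∧ (p.1.2 : ℕ) = 0 ∧ d 0 = 0 then 1 else 0)
  else coeff d (∑ p' : PairIdx k, Ment k p.1.1 p.1.2 p'.1.1 p'.1.2 * S (χ p'))

lemma coeffStep_congr (χ ψ : PairIdx k → R) (d : Fin 2 →₀ ℕ)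
    (h : ∀ p d', zLex d' d → χ p d' = ψ p d') (p : PairIdx k) :
    coeffStep k χ p d = coeffStep k ψ p d := by
  obtain ⟨α, β, rfl⟩ : ∃ α β, d = bideg α β := ⟨_, _, (bideg_apply_zero_one d).symm⟩
  unfold coeffStep
  rcases Nat.eq_zero_or_pos β with hβ | hβ
  · simp only [bideg_one, hβ, if_true]
  · simp only [bideg_one, hβ.ne', if_false, map_sum]
    exact Finset.sum_congr rfl fun p' _ =>
      coeff_Ment_mul_S_congr _ _ _ _ _ _ hβ fun d' hd' => h p' d' hd'

lemma isSolution_iff_isFixedPt (χ : PairIdx k → R) :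
    ((∀ p : PairIdx k, χ p = ∑ p' : PairIdx k, Ment k p.1.1 p.1.2 p'.1.1 p'.1.2 * S (χ p')) ∧
      ∀ (p : PairIdx k) (α : ℕ), coeff (Finsupp.single 0 α) (χ p) =
        if (p.1.1 : ℕ) = 0 ∧ (p.1.2 : ℕ) = 0 ∧ α = 0 then 1 else 0) ↔
      IsFixedPt (coeffStep k) χ := by
  have single_eq (α : ℕ) : Finsupp.single 0 α = bideg α 0 := by simp [bideg]
  simp only [single_eq]
  constructor
  · rintro ⟨hsys, hinit⟩
    funext p d
    obtain ⟨α, β, rfl⟩ : ∃ α β, d = bideg α β := ⟨_, _, (bideg_apply_zero_one d).symm⟩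
    rcases Nat.eq_zero_or_pos β with rfl | hβ
    · rw [coeffStep, if_pos (bideg_one α 0), bideg_zero, ← hinit, coeff_apply]
    · rw [coeffStep, if_neg (by simpa using hβ.ne'), ← hsys p, coeff_apply]
  · intro hfix
    have hinit (p : PairIdx k) (α : ℕ) : coeff (bideg α 0) (χ p) =
        if (p.1.1 : ℕ) = 0 ∧ (p.1.2 : ℕ) = 0 ∧ α = 0 then 1 else 0 := by
      rw [← hfix, coeff_apply, coeffStep, if_pos (bideg_one α 0), bideg_zero]
    refine ⟨fun p => ext fun d => ?_, hinit⟩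
    obtain ⟨α, β, rfl⟩ : ∃ α β, d = bideg α β := ⟨_, _, (bideg_apply_zero_one d).symm⟩
    rcases Nat.eq_zero_or_pos β with rfl | hβ
    · rw [hinit, coeff_bideg_zero_sum_Ment_mul_S χ hinit]
    · conv_lhs => rw [← hfix]
      rw [coeff_apply, coeffStep, if_neg (by simpa using hβ.ne')]

theorem existence_uniqueness_general (k : ℕ) :
    ∃! χ : PairIdx k → R,
      (∀ p : PairIdx k, χ p =
        ∑ p' : PairIdx k,
          Ment k (p.1.1 : ℕ) (p.1.2 : ℕ) (p'.1.1 : ℕ) (p'.1.2 : ℕ) * S (χ p')) ∧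
      (∀ (p : PairIdx k) (α : ℕ),
        MvPowerSeries.coeff (R := K) (Finsupp.single 0 α) (χ p) =
          if (p.1.1 : ℕ) = 0 ∧ (p.1.2 : ℕ) = 0 ∧ α = 0 then 1 else 0) :=
  (existsUnique_congr isSolution_iff_isFixedPt).2
    (zLex_wf.existsUnique_isFixedPt (coeffStep k) coeffStep_congr)

/-- The system `χ(q,z₁,z₂) = M(q,z₁,z₂) χ(q,z₁,qz₂)` with the initial condition
`χ_{i,l}(q,z₁,0) = δ_{i,0}δ_{l,0}` has a unique solution in `(ℂ[[q,z₂]]((z₁⁻¹)))^m`. -/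
theorem existence_uniqueness (k : ℕ) (hk : 1 ≤ k) :
    ∃! χ : PairIdx k → R,
      (∀ p : PairIdx k, χ p =
        ∑ p' : PairIdx k,
          Ment k (p.1.1 : ℕ) (p.1.2 : ℕ) (p'.1.1 : ℕ) (p'.1.2 : ℕ) * S (χ p')) ∧
      (∀ (p : PairIdx k) (α : ℕ),
        MvPowerSeries.coeff (R := K) (Finsupp.single 0 α) (χ p) =
          if (p.1.1 : ℕ) = 0 ∧ (p.1.2 : ℕ) = 0 ∧ α = 0 then 1 else 0) :=
  existence_uniqueness_general k

end DiffEqn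
end

section
/- Jackson's $_6\Phi_5$ summation, special case: as an identity of formal power series in $q$ with coefficients in $\mathbb{Q}[[x,y]]$ (or as meromorphic functions for $|q|<1$), $\frac{(q;q)_\infty}{(qx;q)_\infty (qy;q)_\infty} = \sum_{n=1}^{\infty} \frac{(-1)^{n-1} q^{n(n-1)/2} (1 - q^{2n} x y)}{(q;q)_{n-1}\,(q^{n+1}xy;q)_\infty\,(1-q^n x)(1-q^n y)}$. -/
/-!
Both sides are expanded as `q`-adically convergent double series. By Euler's
`1/(z;q)_∞ = ∑ₖ zᵏ/(q)ₖ`, the left side is `∑_{a,b} q^{a+b} xᵃ yᵇ (q)_∞/((q)_a (q)_b)`.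
In the `n`-th term on the right write
`(1 - q^{2n}xy)/((1 - qⁿx)(1 - qⁿy)) = 1/(1 - qⁿx) + 1/(1 - qⁿy) - 1`,
expand the geometric series and `1/(q^{n+1}xy;q)_∞` by Euler's formula, and sum over `n`
first: Euler's `∑ⱼ (-1)ʲ q^{j(j-1)/2} wʲ/(q)ⱼ = (w;q)_∞` at `w = q^{k+r+1}` turns the `(k, r)`
term into the `(k+r, k)` term of the left side (resp. the `(k, k+r)` term for the `y`-series).
The two triangles `a ≥ b` and `a ≤ b` minus their common diagonal fill the quadrant.
Everything is done modulo `q^K` with sums truncated after `K + 1` terms; congruence modulo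
every `q^K` is equality.
-/

namespace Jackson

/-- Formal power series in `q = X 0`, `x = X 1`, `y = X 2` over `ℚ`. -/
abbrev R := MvPowerSeries (Fin 3) ℚ

noncomputable def qv : R := MvPowerSeries.X 0
noncomputable def xv : R := MvPowerSeries.X 1
noncomputable def yv : R := MvPowerSeries.X 2

/-- The infinite Pochhammer symbol `(a;q)_∞ = ∏_{j≥0}(1 - a qʲ)`, defined
coefficientwise: when `a` has vanishing constant term the coefficient of any
monomial `d` in the partial products stabilizes as soon as the number of factors
exceeds the total degree of `d`. -/
noncomputable def pochInf (a : R) : R := fun d =>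
  MvPowerSeries.coeff d
    (∏ j ∈ Finset.range (d 0 + d 1 + d 2 + 1), (1 - a * qv ^ j))

/-- The finite Pochhammer symbol `(q;q)_n = ∏_{j=0}^{n-1}(1 - q^{j+1})`. -/
noncomputable def pochFin (n : ℕ) : R := ∏ j ∈ Finset.range n, (1 - qv ^ (j + 1))

/-- The formal sum `∑_{n≥1} t n`, defined coefficientwise: applicable when the
`n`-th term is divisible by `q^{n(n-1)/2}`, so that the coefficient of any
monomial `d` in the partial sums stabilizes. -/
noncomputable def sumInf (t : ℕ → R) : R := fun d =>
  MvPowerSeries.coeff d (∑ n ∈ Finset.range (d 0 + d 1 + d 2 + 2), t (n + 1))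

open Finset MvPowerSeries

noncomputable abbrev qIdeal : Ideal R := Ideal.span {qv}

lemma mem_qIdeal_pow {K : ℕ} {f : R} : f ∈ qIdeal ^ K ↔ qv ^ K ∣ f := by
  rw [Ideal.span_singleton_pow, Ideal.mem_span_singleton]

lemma smodEq_qIdeal_pow_iff {K : ℕ} {f g : R} :
    f ≡ g [SMOD qIdeal ^ K] ↔ ∀ d : Fin 3 →₀ ℕ, d 0 < K → coeff d f = coeff d g := by
  simp only [SModEq.sub_mem, mem_qIdeal_pow, qv, X_pow_dvd_iff, map_sub, sub_eq_zero]

lemma eq_of_forall_smodEq {f g : R} (h : ∀ K, f ≡ g [SMOD qIdeal ^ K]) : f = g :=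
  ext fun d => smodEq_qIdeal_pow_iff.mp (h (d 0 + 1)) d (Nat.lt_succ_self _)

lemma constantCoeff_eq_zero_of_qv_dvd {a : R} (h : qv ∣ a) : constantCoeff a = 0 := by
  obtain ⟨b, rfl⟩ := h
  simp [qv]

lemma inv_smodEq_of_mul_smodEq_one {σ k : Type*} [Field k] {I : Ideal (MvPowerSeries σ k)}
    {f g : MvPowerSeries σ k} (hf : constantCoeff f ≠ 0) (h : f * g ≡ 1 [SMOD I]) :
    f⁻¹ ≡ g [SMOD I] := by
  have := (SModEq.refl f⁻¹).mul h.symm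
  rwa [mul_one, ← mul_assoc, MvPowerSeries.inv_mul_cancel f hf, one_mul] at this

lemma sub_smodEq_self_of_dvd {K : ℕ} {f g : R} (h : qv ^ K ∣ g) : f - g ≡ f [SMOD qIdeal ^ K] :=
  SModEq.sub_mem.mpr (by simpa [mem_qIdeal_pow] using h)

lemma add_smodEq_self_of_dvd {K : ℕ} {f g : R} (h : qv ^ K ∣ g) : f + g ≡ f [SMOD qIdeal ^ K] :=
  SModEq.sub_mem.mpr (by simpa [mem_qIdeal_pow] using h)

lemma sumInf_eq_of_smodEq {t : ℕ → R} {f : R}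
    (h : ∀ K M, K < M → ∑ n ∈ range M, t (n + 1) ≡ f [SMOD qIdeal ^ K]) : sumInf t = f :=
  ext fun d => smodEq_qIdeal_pow_iff.mp (h (d 0 + 1) _ (by omega)) d (Nat.lt_succ_self _)

section Pochhammer

variable {a : R} {K : ℕ}

lemma prod_one_sub_mul_qv_pow_smodEq {m : ℕ} (hm : K ≤ m) :
    ∏ j ∈ range m, (1 - a * qv ^ j) ≡ ∏ j ∈ range K, (1 - a * qv ^ j) [SMOD qIdeal ^ K] := by
  have htail : ∏ j ∈ Ico K m, (1 - a * qv ^ j) ≡ ∏ j ∈ Ico K m, 1 [SMOD qIdeal ^ K] :=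
    SModEq.prod fun j hj =>
      sub_smodEq_self_of_dvd ((pow_dvd_pow qv (mem_Ico.mp hj).1).mul_left a)
  rw [prod_const_one] at htail
  rw [← prod_range_mul_prod_Ico _ hm]
  simpa using (SModEq.refl (∏ j ∈ range K, (1 - a * qv ^ j))).mul htail

lemma pochInf_smodEq_prod {m : ℕ} (hm : K ≤ m) :
    pochInf a ≡ ∏ j ∈ range m, (1 - a * qv ^ j) [SMOD qIdeal ^ K] := by
  refine smodEq_qIdeal_pow_iff.mpr fun d hd => ?_
  -- `coeff d` of a product with more than `d 0` factors does not depend on their number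
  have hstable (n : ℕ) (hn : d 0 < n) := smodEq_qIdeal_pow_iff.mp
    (prod_one_sub_mul_qv_pow_smodEq (a := a) (Nat.succ_le_of_lt hn)) d (Nat.lt_succ_self _)
  exact (hstable _ (by omega)).trans (hstable m (by omega)).symm

lemma pochInf_smodEq_one (hK : qv ^ K ∣ a) : pochInf a ≡ 1 [SMOD qIdeal ^ K] := by
  refine (pochInf_smodEq_prod le_rfl).trans ?_
  simpa using SModEq.prod (s := range K) (x := fun j => 1 - a * qv ^ j) (y := fun _ => 1)
    fun j _ => sub_smodEq_self_of_dvd (hK.mul_right (qv ^ j))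

lemma constantCoeff_pochInf (ha : qv ∣ a) : constantCoeff (pochInf a) = 1 := by
  simpa using smodEq_qIdeal_pow_iff.mp (pochInf_smodEq_one (by rwa [pow_one])) 0 one_pos

lemma pochInf_eq_one_sub_mul (a : R) : pochInf a = (1 - a) * pochInf (a * qv) := by
  refine eq_of_forall_smodEq fun K => (pochInf_smodEq_prod K.le_succ).trans ?_
  refine SModEq.symm ?_
  have := (SModEq.refl (1 - a)).mul (pochInf_smodEq_prod (a := a * qv) (K := K) le_rfl)
  simpa [prod_range_succ', pow_succ, mul_assoc, mul_comm] using this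

lemma constantCoeff_pochFin (n : ℕ) : constantCoeff (pochFin n) = 1 := by
  simp [pochFin, map_prod, qv]

lemma pochFin_succ (n : ℕ) : pochFin (n + 1) = pochFin n * (1 - qv ^ (n + 1)) :=
  prod_range_succ _ n

lemma one_sub_qv_pow_mul_inv_pochFin_succ (k : ℕ) :
    (1 - qv ^ (k + 1)) * (pochFin (k + 1))⁻¹ = (pochFin k)⁻¹ := by
  rw [pochFin_succ, MvPowerSeries.mul_inv_rev, ← mul_assoc,
    MvPowerSeries.mul_inv_cancel _ (by simp [qv]), one_mul]

lemma pochFin_mul_pochInf_qv_pow_succ (s : ℕ) :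
    pochFin s * pochInf (qv ^ (s + 1)) = pochInf qv := by
  induction s with
  | zero => simp [pochFin]
  | succ s ih => rw [← ih, pochInf_eq_one_sub_mul (qv ^ (s + 1)), pochFin_succ, ← pow_succ]; ring

lemma pochInf_qv_pow_succ (s : ℕ) : pochInf (qv ^ (s + 1)) = (pochFin s)⁻¹ * pochInf qv := by
  rw [← pochFin_mul_pochInf_qv_pow_succ s, ← mul_assoc,
    MvPowerSeries.inv_mul_cancel _ (by simp [constantCoeff_pochFin]), one_mul]

end Pochhammer

noncomputable def qSeries (c : ℕ → R) (z : R) (A : ℕ) : R :=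
  ∑ k ∈ range A, c k * z ^ k * (pochFin k)⁻¹

lemma qSeries_sub_qSeries_mul_qv (c : ℕ → R) (z : R) (A : ℕ) :
    qSeries c z (A + 1) - qSeries c (z * qv) (A + 1) =
      ∑ k ∈ range A, c (k + 1) * z ^ (k + 1) * (pochFin k)⁻¹ := by
  rw [qSeries, qSeries, ← sum_sub_distrib, sum_range_succ']
  simp only [pow_zero, mul_one, sub_self, add_zero]
  refine sum_congr rfl fun k _ => ?_
  rw [← one_sub_qv_pow_mul_inv_pochFin_succ k]
  ring

lemma qSeries_smodEq_of_dvd (c : ℕ → R) {z : R} {K A : ℕ} (hz : qv ^ K ∣ z) (hA : 0 < A) :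
    qSeries c z A ≡ c 0 [SMOD qIdeal ^ K] := by
  obtain ⟨A, rfl⟩ := Nat.exists_eq_add_of_lt hA
  have htail : qv ^ K ∣ ∑ k ∈ range A, c (k + 1) * z ^ (k + 1) * (pochFin (k + 1))⁻¹ :=
    dvd_sum fun k _ => ((hz.trans (dvd_pow_self z k.succ_ne_zero)).mul_left _).mul_right _
  rw [qSeries, sum_range_succ', add_comm]
  simpa [pochFin] using add_smodEq_self_of_dvd (f := c 0) htail

lemma smodEq_zero_of_smodEq_mul_shift {F g : R → R} {K : ℕ}
    (hshift : ∀ z, qv ∣ z → F z ≡ g z * F (z * qv) [SMOD qIdeal ^ K])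
    (hbase : ∀ z, qv ^ K ∣ z → F z ≡ 0 [SMOD qIdeal ^ K]) {z : R} (hz : qv ∣ z) :
    F z ≡ 0 [SMOD qIdeal ^ K] := by
  suffices h : ∀ j z, qv ∣ z → qv ^ K ∣ z * qv ^ j → F z ≡ 0 [SMOD qIdeal ^ K] from
    h K z hz (dvd_mul_left _ _)
  intro j
  induction j with
  | zero => intro z _ hK; exact hbase z (by simpa using hK)
  | succ j ih =>
    intro z hz hK
    have hnext := ih (z * qv) (dvd_mul_of_dvd_left hz qv) (by rwa [mul_assoc, ← pow_succ'])
    simpa using (hshift z hz).trans ((SModEq.refl (g z)).mul hnext)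

section Euler

variable {z w : R} {K A : ℕ}

lemma one_sub_mul_qSeries_one (z : R) (A : ℕ) :
    (1 - z) * qSeries (fun _ => 1) z (A + 1) =
      qSeries (fun _ => 1) (z * qv) (A + 1) - z ^ (A + 1) * (pochFin A)⁻¹ := by
  have hdiff := qSeries_sub_qSeries_mul_qv (fun _ => 1) z A
  have hlast : qSeries (fun _ => 1) z (A + 1) =
      ∑ k ∈ range A, z ^ k * (pochFin k)⁻¹ + z ^ A * (pochFin A)⁻¹ := by
    simp [qSeries, sum_range_succ]
  simp only [one_mul] at hdiff
  rw [← sum_congr rfl fun k _ => by rw [pow_succ', mul_assoc], ← mul_sum] at hdiff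
  linear_combination hdiff - z * hlast

lemma pochInf_mul_qSeries_one_smodEq_one (hz : qv ∣ z) (hA : K < A) :
    pochInf z * qSeries (fun _ => 1) z A ≡ 1 [SMOD qIdeal ^ K] := by
  obtain ⟨A, rfl⟩ : ∃ A', A = A' + 1 := ⟨A - 1, by omega⟩
  refine sub_smodEq_zero.mp (smodEq_zero_of_smodEq_mul_shift
    (F := fun z => pochInf z * qSeries (fun _ => 1) z (A + 1) - 1) (g := fun _ => 1)
    (fun z hz => ?_) (fun z hzK => ?_) hz)
  · have hsmall : qv ^ K ∣ pochInf (z * qv) * (z ^ (A + 1) * (pochFin A)⁻¹) :=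
      (((pow_dvd_pow qv (by omega)).trans (pow_dvd_pow_of_dvd hz _)).mul_right _).mul_left _
    rw [one_mul, pochInf_eq_one_sub_mul z, mul_comm (1 - z), mul_assoc, one_sub_mul_qSeries_one]
    simpa [mul_sub] using (sub_smodEq_self_of_dvd hsmall).sub (SModEq.refl 1)
  · simpa using ((pochInf_smodEq_one hzK).mul
      (qSeries_smodEq_of_dvd (fun _ => 1) hzK A.succ_pos)).sub (SModEq.refl 1)

lemma inv_pochInf_smodEq_qSeries_one (hz : qv ∣ z) (hA : K < A) :
    (pochInf z)⁻¹ ≡ qSeries (fun _ => 1) z A [SMOD qIdeal ^ K] :=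
  inv_smodEq_of_mul_smodEq_one (by simp [constantCoeff_pochInf hz])
    (pochInf_mul_qSeries_one_smodEq_one hz hA)

noncomputable def altCoeff (j : ℕ) : R := (-1) ^ j * qv ^ j.choose 2

lemma qSeries_altCoeff_eq (w : R) (A : ℕ) :
    qSeries altCoeff w (A + 1) = (1 - w) * qSeries altCoeff (w * qv) (A + 1) +
      w * (altCoeff A * (w * qv) ^ A * (pochFin A)⁻¹) := by
  have hdiff := qSeries_sub_qSeries_mul_qv altCoeff w A
  have hlast : qSeries altCoeff (w * qv) (A + 1) =
      ∑ k ∈ range A, altCoeff k * (w * qv) ^ k * (pochFin k)⁻¹ +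
        altCoeff A * (w * qv) ^ A * (pochFin A)⁻¹ := sum_range_succ _ A
  have hterm (k : ℕ) : altCoeff (k + 1) * w ^ (k + 1) * (pochFin k)⁻¹ =
      -w * (altCoeff k * (w * qv) ^ k * (pochFin k)⁻¹) := by
    rw [altCoeff, altCoeff, Nat.choose_succ_succ', Nat.choose_one_right]
    ring
  rw [sum_congr rfl fun k _ => hterm k, ← mul_sum] at hdiff
  linear_combination hdiff + w * hlast

lemma qSeries_altCoeff_smodEq_pochInf (hw : qv ∣ w) (hA : K < A) :
    qSeries altCoeff w A ≡ pochInf w [SMOD qIdeal ^ K] := by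
  obtain ⟨A, rfl⟩ : ∃ A', A = A' + 1 := ⟨A - 1, by omega⟩
  refine sub_smodEq_zero.mp (smodEq_zero_of_smodEq_mul_shift
    (F := fun w => qSeries altCoeff w (A + 1) - pochInf w) (g := fun w => 1 - w)
    (fun w hw => ?_) (fun w hwK => ?_) hw)
  · have hsmall : qv ^ K ∣ w * (altCoeff A * (w * qv) ^ A * (pochFin A)⁻¹) :=
      ((((pow_dvd_pow qv (by omega)).trans (pow_dvd_pow_of_dvd (dvd_mul_left qv w) A)).mul_left
        _).mul_right _).mul_left _
    rw [qSeries_altCoeff_eq, pochInf_eq_one_sub_mul w, add_sub_right_comm, ← mul_sub]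
    exact add_smodEq_self_of_dvd hsmall
  · simpa [altCoeff] using
      (qSeries_smodEq_of_dvd altCoeff hwK A.succ_pos).sub (pochInf_smodEq_one hwK)

end Euler

lemma inv_one_sub_smodEq_sum_pow {z : R} {K A : ℕ} (hz : qv ∣ z) (hA : K ≤ A) :
    (1 - z)⁻¹ ≡ ∑ r ∈ range A, z ^ r [SMOD qIdeal ^ K] := by
  refine inv_smodEq_of_mul_smodEq_one (by simp [constantCoeff_eq_zero_of_qv_dvd hz]) ?_
  rw [mul_neg_geom_sum]
  exact sub_smodEq_self_of_dvd ((pow_dvd_pow qv hA).trans (pow_dvd_pow_of_dvd hz A))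

section Triangles

variable {S : Type*} [CommRing S] {I : Ideal S} {A : ℕ}

lemma sum_range_add_smodEq_sum_Ico (f : ℕ → S) (hf : ∀ a, A ≤ a → f a ∈ I) (k : ℕ) :
    ∑ r ∈ range A, f (k + r) ≡ ∑ a ∈ Ico k A, f a [SMOD I] := by
  rw [sum_Ico_eq_sum_range, ← sum_range_add_sum_Ico _ (Nat.sub_le A k), SModEq.sub_mem,
    add_sub_cancel_left]
  exact I.sum_mem fun r hr => hf _ (by simp only [mem_Ico] at hr; omega)

lemma sum_triangles_smodEq (F : ℕ → ℕ → S) (hF : ∀ a b, A ≤ max a b → F a b ∈ I) :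
    ∑ k ∈ range A, ∑ r ∈ range A, (F (k + r) k + F k (k + r)) - ∑ k ∈ range A, F k k ≡
      ∑ a ∈ range A, ∑ b ∈ range A, F a b [SMOD I] := by
  have hlower : ∑ k ∈ range A, ∑ r ∈ range A, F (k + r) k ≡
      ∑ a ∈ range A, ∑ b ∈ range (a + 1), F a b [SMOD I] := by
    have h := sum_Ico_Ico_comm 0 A fun k a => F a k
    simp only [← range_eq_Ico] at h
    exact h ▸ SModEq.sum fun k _ => sum_range_add_smodEq_sum_Ico (F · k)
      (fun a ha => hF a k (le_max_of_le_left ha)) k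
  have hupper : ∑ k ∈ range A, ∑ r ∈ range A, F k (k + r) ≡
      ∑ a ∈ range A, ∑ b ∈ Ico a A, F a b [SMOD I] :=
    SModEq.sum fun a _ => sum_range_add_smodEq_sum_Ico (F a)
      (fun b hb => hF a b (le_max_of_le_right hb)) a
  calc _ = ∑ k ∈ range A, ∑ r ∈ range A, F (k + r) k +
          ∑ k ∈ range A, ∑ r ∈ range A, F k (k + r) - ∑ k ∈ range A, F k k := by
        simp only [sum_add_distrib]
    _ ≡ ∑ a ∈ range A, ∑ b ∈ range (a + 1), F a b + ∑ a ∈ range A, ∑ b ∈ Ico a A, F a b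
        - ∑ a ∈ range A, F a a [SMOD I] := (hlower.add hupper).sub SModEq.rfl
    _ = _ := by
      rw [← sum_add_distrib, ← sum_sub_distrib]
      refine sum_congr rfl fun a ha => ?_
      rw [sum_range_succ, add_right_comm, add_sub_cancel_right,
        sum_range_add_sum_Ico _ (mem_range.mp ha).le]

end Triangles

lemma one_sub_mul_mul_inv_mul_inv {σ k : Type*} [Field k] {a b : MvPowerSeries σ k}
    (ha : constantCoeff a ≠ 1) (hb : constantCoeff b ≠ 1) :
    (1 - a * b) * ((1 - a)⁻¹ * (1 - b)⁻¹) = (1 - a)⁻¹ + (1 - b)⁻¹ - 1 := by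
  have hia := MvPowerSeries.mul_inv_cancel (1 - a) (by simpa [sub_eq_zero] using ha.symm)
  have hib := MvPowerSeries.mul_inv_cancel (1 - b) (by simpa [sub_eq_zero] using hb.symm)
  linear_combination ((1 - b)⁻¹ - (1 - b) * (1 - b)⁻¹) * hia + ((1 - a)⁻¹ - 1) * hib

section Summation

variable (u v : R) {K A M : ℕ}

noncomputable def jacksonTerm (n : ℕ) : R :=
  (-1 : R) ^ (n - 1) * qv ^ (n * (n - 1) / 2) * (1 - qv ^ (2 * n) * u * v) *
    (pochFin (n - 1) * pochInf (qv ^ (n + 1) * u * v) * (1 - qv ^ n * u) * (1 - qv ^ n * v))⁻¹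

noncomputable def lhsTerm (a b : ℕ) : R :=
  qv ^ (a + b) * u ^ a * v ^ b * (pochFin a)⁻¹ * (pochFin b)⁻¹ * pochInf qv

/-- The `(k, r)` term of `jacksonTerm u v (n + 1)` once `1/(q^{n+2}uv;q)_∞` is expanded in `k`
and `1/(1 - q^{n+1}u)` in `r`, arranged so that summing over `n` gives Euler's series for
`(q^{k+r+1};q)_∞`. -/
noncomputable def rhsTerm (n k r : ℕ) : R :=
  qv ^ (2 * k + r) * u ^ (k + r) * v ^ k * (pochFin k)⁻¹ *
    (altCoeff n * (qv ^ (k + r + 1)) ^ n * (pochFin n)⁻¹)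

lemma lhsTerm_swap (a b : ℕ) : lhsTerm v u a b = lhsTerm u v b a := by
  rw [lhsTerm, lhsTerm, add_comm]; ring

lemma qv_pow_dvd_lhsTerm (a b : ℕ) : qv ^ (a + b) ∣ lhsTerm u v a b := by
  simp only [lhsTerm, mul_assoc]
  exact dvd_mul_right _ _

lemma pochInf_mul_inv_smodEq_sum_lhsTerm (hA : K < A) :
    pochInf qv * (pochInf (qv * u) * pochInf (qv * v))⁻¹ ≡
      ∑ a ∈ range A, ∑ b ∈ range A, lhsTerm u v a b [SMOD qIdeal ^ K] := by
  have hexp : pochInf qv * (qSeries (fun _ => 1) (qv * v) A * qSeries (fun _ => 1) (qv * u) A) =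
      ∑ a ∈ range A, ∑ b ∈ range A, lhsTerm u v a b := by
    rw [qSeries, qSeries, mul_comm (∑ k ∈ range A, _), sum_mul_sum]
    simp only [mul_sum]
    refine sum_congr rfl fun a _ => sum_congr rfl fun b _ => ?_
    rw [lhsTerm]; ring
  rw [MvPowerSeries.mul_inv_rev, ← hexp]
  exact SModEq.rfl.mul ((inv_pochInf_smodEq_qSeries_one (dvd_mul_right qv v) hA).mul
    (inv_pochInf_smodEq_qSeries_one (dvd_mul_right qv u) hA))

lemma sum_rhsTerm_smodEq (k r : ℕ) (hM : K < M) :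
    ∑ n ∈ range M, rhsTerm u v n k r ≡ lhsTerm u v (k + r) k [SMOD qIdeal ^ K] := by
  have hlhs : lhsTerm u v (k + r) k = qv ^ (2 * k + r) * u ^ (k + r) * v ^ k * (pochFin k)⁻¹ *
      ((pochFin (k + r))⁻¹ * pochInf qv) := by
    rw [lhsTerm]; ring
  simp only [rhsTerm, ← mul_sum]
  rw [hlhs, ← pochInf_qv_pow_succ]
  exact SModEq.rfl.mul
    (qSeries_altCoeff_smodEq_pochInf (dvd_pow_self qv (k + r).succ_ne_zero) hM)

lemma jacksonTerm_succ_smodEq (n : ℕ) (hA : K < A) :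
    jacksonTerm u v (n + 1) ≡
      ∑ k ∈ range A, ∑ r ∈ range A, (rhsTerm u v n k r + rhsTerm v u n k r) -
        ∑ k ∈ range A, rhsTerm u v n k 0 [SMOD qIdeal ^ K] := by
  have hdvd (w : R) : qv ∣ qv ^ (n + 1) * w :=
    dvd_mul_of_dvd_left (dvd_pow_self qv n.succ_ne_zero) w
  have hcc (w : R) : constantCoeff (qv ^ (n + 1) * w) ≠ 1 := by
    simp [constantCoeff_eq_zero_of_qv_dvd (hdvd w)]
  have hfactor : jacksonTerm u v (n + 1) =
      altCoeff n * qv ^ n * (pochFin n)⁻¹ * (pochInf (qv ^ (n + 1 + 1) * u * v))⁻¹ *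
        ((1 - qv ^ (n + 1) * u)⁻¹ + (1 - qv ^ (n + 1) * v)⁻¹ - 1) := by
    rw [← one_sub_mul_mul_inv_mul_inv (hcc u) (hcc v), jacksonTerm, ← Nat.choose_two_right,
      Nat.add_sub_cancel, Nat.choose_succ_succ', Nat.choose_one_right, altCoeff]
    simp only [MvPowerSeries.mul_inv_rev]
    ring
  have hexpand : altCoeff n * qv ^ n * (pochFin n)⁻¹ *
      qSeries (fun _ => 1) (qv ^ (n + 1 + 1) * u * v) A *
        (∑ r ∈ range A, (qv ^ (n + 1) * u) ^ r + ∑ r ∈ range A, (qv ^ (n + 1) * v) ^ r - 1) =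
      ∑ k ∈ range A, ∑ r ∈ range A, (rhsTerm u v n k r + rhsTerm v u n k r) -
        ∑ k ∈ range A, rhsTerm u v n k 0 := by
    rw [qSeries, mul_sum, sum_mul, ← sum_sub_distrib]
    refine sum_congr rfl fun k _ => ?_
    rw [sum_add_distrib, mul_sub, mul_add, mul_sum, mul_sum, mul_one]
    refine congrArg₂ (· - ·) (congrArg₂ (· + ·) ?_ ?_) (by rw [rhsTerm]; ring) <;>
      exact sum_congr rfl fun r _ => by rw [rhsTerm]; ring
  have hpoch : qv ∣ qv ^ (n + 1 + 1) * u * v := (hdvd (qv * u)).trans ⟨v, by ring⟩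
  rw [hfactor, ← hexpand]
  exact (SModEq.rfl.mul (inv_pochInf_smodEq_qSeries_one hpoch hA)).mul
    (((inv_one_sub_smodEq_sum_pow (hdvd u) hA.le).add
      (inv_one_sub_smodEq_sum_pow (hdvd v) hA.le)).sub SModEq.rfl)

lemma sum_jacksonTerm_smodEq (hM : K < M) :
    ∑ n ∈ range M, jacksonTerm u v (n + 1) ≡
      pochInf qv * (pochInf (qv * u) * pochInf (qv * v))⁻¹ [SMOD qIdeal ^ K] := by
  have hsmall (a b : ℕ) (h : K + 1 ≤ max a b) : lhsTerm u v a b ∈ qIdeal ^ K :=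
    mem_qIdeal_pow.mpr ((pow_dvd_pow qv (by omega)).trans (qv_pow_dvd_lhsTerm u v a b))
  calc ∑ n ∈ range M, jacksonTerm u v (n + 1)
      ≡ ∑ n ∈ range M, (∑ k ∈ range (K + 1), ∑ r ∈ range (K + 1),
          (rhsTerm u v n k r + rhsTerm v u n k r) - ∑ k ∈ range (K + 1), rhsTerm u v n k 0)
          [SMOD qIdeal ^ K] :=
        SModEq.sum fun n _ => jacksonTerm_succ_smodEq u v n K.lt_succ_self
    _ = ∑ k ∈ range (K + 1), ∑ r ∈ range (K + 1),
          (∑ n ∈ range M, rhsTerm u v n k r + ∑ n ∈ range M, rhsTerm v u n k r) -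
          ∑ k ∈ range (K + 1), ∑ n ∈ range M, rhsTerm u v n k 0 := by
        simp only [← sum_add_distrib]
        rw [sum_sub_distrib, sum_comm (s := range M) (t := range (K + 1))
          (f := fun n k => rhsTerm u v n k 0), sum_comm]
        exact congrArg (· - _) (sum_congr rfl fun k _ => sum_comm)
    _ ≡ ∑ k ∈ range (K + 1), ∑ r ∈ range (K + 1),
          (lhsTerm u v (k + r) k + lhsTerm u v k (k + r)) -
          ∑ k ∈ range (K + 1), lhsTerm u v k k [SMOD qIdeal ^ K] := by
        refine (SModEq.sum fun k _ => SModEq.sum fun r _ =>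
          (sum_rhsTerm_smodEq u v k r hM).add ?_).sub (SModEq.sum fun k _ => ?_)
        · rw [← lhsTerm_swap]
          exact sum_rhsTerm_smodEq v u k r hM
        · simpa using sum_rhsTerm_smodEq u v k 0 hM
    _ ≡ ∑ a ∈ range (K + 1), ∑ b ∈ range (K + 1), lhsTerm u v a b [SMOD qIdeal ^ K] :=
        sum_triangles_smodEq _ hsmall
    _ ≡ _ [SMOD qIdeal ^ K] := (pochInf_mul_inv_smodEq_sum_lhsTerm u v K.lt_succ_self).symm

end Summation

theorem pochInf_mul_inv_eq_sumInf_jacksonTerm (u v : R) :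
    pochInf qv * (pochInf (qv * u) * pochInf (qv * v))⁻¹ = sumInf (jacksonTerm u v) :=
  (sumInf_eq_of_smodEq fun _ _ hM => sum_jacksonTerm_smodEq u v hM).symm

/-- The special case of Jackson's `₆Φ₅` summation:
`(q)_∞ / ((qx)_∞ (qy)_∞)
  = ∑_{n≥1} (-1)^{n-1} q^{n(n-1)/2} (1-q^{2n}xy) / ((q)_{n-1} (q^{n+1}xy)_∞ (1-qⁿx)(1-qⁿy))`,
as formal power series in `q, x, y` (inverses are taken in `ℚ[[q,x,y]]`, where
every factor involved has constant term `1`). -/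
theorem jackson_special_case :
    pochInf qv * (pochInf (qv * xv) * pochInf (qv * yv))⁻¹ =
      sumInf (fun n =>
        (-1 : R) ^ (n - 1) * qv ^ (n * (n - 1) / 2) * (1 - qv ^ (2 * n) * xv * yv) *
          (pochFin (n - 1) * pochInf (qv ^ (n + 1) * xv * yv) *
            (1 - qv ^ n * xv) * (1 - qv ^ n * yv))⁻¹) :=
  pochInf_mul_inv_eq_sumInf_jacksonTerm xv yv

end Jackson
end
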